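/- The Petersen graph has metric dimension 3. -/
import Mathlib


open SimpleGraph

/-- `W` is a resolving set of `G`: every pair of distinct vertices is
distinguished by its distance to some vertex of `W`. -/
def IsResolving {V : Type*} (G : SimpleGraph V) (W : Set V) : Prop :=
  ∀ x y : V, x ≠ y → ∃ z ∈ W, G.dist x z ≠ G.dist y z

/-- Vertices of the Petersen graph: `Sum.inl i` is the outer vertex `u_{i+1}` and
`Sum.inr i` is the inner vertex `w_{i+1}` (0-based indexing of the paper's labels). -/
abbrev PetersenVert := Fin 5 ⊕ Fin 5

/-- The relation generating the edges of the Petersen graph: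
`u_i u_{i+1}`, `u_i w_i` and `w_i w_{i+2}`, indices modulo 5. -/
def petersenRel : PetersenVert → PetersenVert → Prop
  | Sum.inl i, Sum.inl j => j = i + 1
  | Sum.inl i, Sum.inr j => i = j
  | Sum.inr i, Sum.inr j => j = i + 2
  | _, _ => False

/-- The Petersen graph. -/
def petersen : SimpleGraph PetersenVert := SimpleGraph.fromRel petersenRel

/-- The metric dimension of `G`: the minimum cardinality of a resolving set. -/
noncomputable def metricDim {V : Type*} (G : SimpleGraph V) : ℕ :=
  sInf {n | ∃ W : Set V, W.ncard = n ∧ IsResolving G W}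

instance : DecidableRel petersenRel := fun x y => by
  rcases x with i | i <;> rcases y with j | j <;> simp only [petersenRel] <;> infer_instance

instance : DecidableRel petersen.Adj := fun x y =>
  decidable_of_iff (x ≠ y ∧ (petersenRel x y ∨ petersenRel y x)) (by
    rw [petersen, SimpleGraph.fromRel_adj])

lemma petersen_common : ∀ x y : PetersenVert, x ≠ y → ¬ petersen.Adj x y →
    ∃ z, petersen.Adj x z ∧ petersen.Adj z y := by decide

/-- Computable distance function for the Petersen graph. -/
def pD (x y : PetersenVert) : ℕ :=
  if x = y then 0 else if petersen.Adj x y then 1 else 2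

lemma dist_eq_pD (x y : PetersenVert) : petersen.dist x y = pD x y := by
  unfold pD
  split_ifs with h1 h2
  · subst h1; exact SimpleGraph.dist_self
  · exact SimpleGraph.dist_eq_one_iff_adj.mpr h2
  · obtain ⟨z, hxz, hzy⟩ := petersen_common x y h1 h2
    have hw : petersen.Reachable x y := ⟨(hxz.toWalk.append hzy.toWalk)⟩
    have hle : petersen.dist x y ≤ 2 := by
      have := SimpleGraph.dist_le (hxz.toWalk.append hzy.toWalk)
      simpa using this
    have h0 : petersen.dist x y ≠ 0 := by
      intro h
      exact h1 (hw.dist_eq_zero_iff.mp h)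
    have hne1 : petersen.dist x y ≠ 1 := fun h => h2 (SimpleGraph.dist_eq_one_iff_adj.mp h)
    omega

lemma isResolving_iff (W : Set PetersenVert) :
    IsResolving petersen W ↔ ∀ x y : PetersenVert, x ≠ y → ∃ z ∈ W, pD x z ≠ pD y z := by
  unfold IsResolving
  simp only [dist_eq_pD]

lemma resolving3 : IsResolving petersen {Sum.inl 0, Sum.inl 2, Sum.inr 3} := by
  rw [isResolving_iff]
  decide

lemma not_resolving2 : ∀ a b : PetersenVert,
    ¬ IsResolving petersen {a, b} := by
  intro a b h
  rw [isResolving_iff] at h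
  revert h
  revert a b
  decide

/-- The Petersen graph has metric dimension 3. -/
theorem metricDim_petersen : metricDim petersen = 3 := by
  unfold metricDim
  have h3 : (3 : ℕ) ∈ {n | ∃ W : Set PetersenVert, W.ncard = n ∧ IsResolving petersen W} := by
    refine ⟨{Sum.inl 0, Sum.inl 2, Sum.inr 3}, ?_, resolving3⟩
    rw [Set.ncard_insert_of_notMem (by decide), Set.ncard_insert_of_notMem (by decide),
      Set.ncard_singleton]
  refine le_antisymm (Nat.sInf_le h3) (le_csInf ⟨3, h3⟩ ?_)
  rintro n ⟨W, hcard, hres⟩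
  by_contra hlt
  push_neg at hlt
  interval_cases n
  · rw [Set.ncard_eq_zero (Set.toFinite W)] at hcard
    subst hcard
    obtain ⟨z, hz, _⟩ := hres (Sum.inl 0) (Sum.inl 1) (by decide)
    exact hz
  · rw [Set.ncard_eq_one] at hcard
    obtain ⟨a, rfl⟩ := hcard
    have := not_resolving2 a a
    rw [Set.pair_eq_singleton] at this
    exact this hres
  · rw [Set.ncard_eq_two] at hcard
    obtain ⟨a, b, -, rfl⟩ := hcard
    exact not_resolving2 a b hres
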